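/- If (G1, s1, t1) is S1-forcing and (G2, s2, t2) is S2-forcing with respect to C_n, then their serial sum (obtained by identifying t1 with s2, with terminals s1 and t2) is (S1 + S2)-forcing. -/

import Mathlib

open Pointwise

/-!
A homomorphism from the serial sum to `C_n` is the same as a pair of homomorphisms from the
summands that agree on the glued vertex. Since the rotations `x ↦ x + c` are automorphisms of
`C_n`, the forced set of `(G, s, t)` consists of the differences `φ t - φ s`, and these differences
add up along the glued vertex.
-/

/-- The cycle `C_n` on vertex set `ZMod n`: `u ~ v` iff `u ≠ v` and `u - v = ±1`. -/
def cycleGraph (n : ℕ) : SimpleGraph (ZMod n) :=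
  SimpleGraph.fromRel (fun u v => u - v = 1)

/-- The forced set of a 2-terminal graph `(G, s, t)` with respect to `C_n`. -/
def forcedSet (n : ℕ) {V : Type*} (G : SimpleGraph V) (s t : V) : Set (ZMod n) :=
  {x | ∃ φ : G →g cycleGraph n, φ s = 0 ∧ φ t = x}

/-- The serial sum of 2-terminal graphs `(G1,s1,t1)` and `(G2,s2,t2)`, obtained by
identifying `t1` with `s2`.  Its vertex set is `V1 ⊕ {v : V2 // v ≠ s2}`, with the
rôle of `s2` played by `Sum.inl t1`. -/
def serialSum {V1 V2 : Type*} (G1 : SimpleGraph V1) (G2 : SimpleGraph V2)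
    (t1 : V1) (s2 : V2) : SimpleGraph (V1 ⊕ {v : V2 // v ≠ s2}) :=
  SimpleGraph.fromRel (fun a b =>
    match a, b with
    | Sum.inl u, Sum.inl v => G1.Adj u v
    | Sum.inr u, Sum.inr v => G2.Adj u.1 v.1
    | Sum.inl u, Sum.inr v => u = t1 ∧ G2.Adj s2 v.1
    | Sum.inr _, Sum.inl _ => False)

namespace cycleGraph

variable {n : ℕ}

@[simp]
lemma adj_add_right (c : ZMod n) {a b : ZMod n} :
    (cycleGraph n).Adj (a + c) (b + c) ↔ (cycleGraph n).Adj a b := by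
  simp [cycleGraph, SimpleGraph.fromRel_adj]

def addRight (c : ZMod n) : cycleGraph n →g cycleGraph n where
  toFun a := a + c
  map_rel' h := (adj_add_right c).2 h

@[simp]
lemma addRight_apply (c a : ZMod n) : addRight c a = a + c := rfl

end cycleGraph

lemma sub_mem_forcedSet {n : ℕ} {V : Type*} {G : SimpleGraph V} (φ : G →g cycleGraph n)
    (s t : V) : φ t - φ s ∈ forcedSet n G s t :=
  ⟨(cycleGraph.addRight (-φ s)).comp φ, by simp, by simp [sub_eq_add_neg]⟩

namespace serialSum

variable {V1 V2 : Type*} {G1 : SimpleGraph V1} {G2 : SimpleGraph V2} {t1 : V1} {s2 : V2}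

@[simp]
lemma adj_inl_inl {u v : V1} :
    (serialSum G1 G2 t1 s2).Adj (Sum.inl u) (Sum.inl v) ↔ G1.Adj u v := by
  simp only [serialSum, SimpleGraph.fromRel_adj]
  exact ⟨fun ⟨_, h⟩ => h.elim id fun h => h.symm, fun h => ⟨by simp [h.ne], Or.inl h⟩⟩

@[simp]
lemma adj_inr_inr {u v : {v : V2 // v ≠ s2}} :
    (serialSum G1 G2 t1 s2).Adj (Sum.inr u) (Sum.inr v) ↔ G2.Adj u.1 v.1 := by
  simp only [serialSum, SimpleGraph.fromRel_adj]
  exact ⟨fun ⟨_, h⟩ => h.elim id fun h => h.symm,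
    fun h => ⟨fun huv => h.ne (by cases huv; rfl), Or.inl h⟩⟩

@[simp]
lemma adj_inl_inr {u : V1} {v : {v : V2 // v ≠ s2}} :
    (serialSum G1 G2 t1 s2).Adj (Sum.inl u) (Sum.inr v) ↔ u = t1 ∧ G2.Adj s2 v.1 := by
  simp [serialSum, SimpleGraph.fromRel_adj]

@[simp]
lemma adj_inr_inl {u : {v : V2 // v ≠ s2}} {v : V1} :
    (serialSum G1 G2 t1 s2).Adj (Sum.inr u) (Sum.inl v) ↔ v = t1 ∧ G2.Adj s2 u.1 := by
  rw [SimpleGraph.adj_comm, adj_inl_inr]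

def inl : G1 →g serialSum G1 G2 t1 s2 where
  toFun := Sum.inl
  map_rel' h := adj_inl_inl.2 h

@[simp]
lemma inl_apply (v : V1) : (inl : G1 →g serialSum G1 G2 t1 s2) v = Sum.inl v := rfl

open Classical in
noncomputable def inr : G2 →g serialSum G1 G2 t1 s2 where
  toFun v := if h : v = s2 then Sum.inl t1 else Sum.inr ⟨v, h⟩
  map_rel' {u v} h := by
    by_cases hu : u = s2 <;> by_cases hv : v = s2
    · exact (h.ne (hu.trans hv.symm)).elim
    · subst hu; simpa [hv] using h
    · subst hv; simpa [hu] using h.symm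
    · simpa [hu, hv] using h

@[simp]
lemma inr_apply_self : (inr : G2 →g serialSum G1 G2 t1 s2) s2 = Sum.inl t1 := by
  simp [inr]

@[simp]
lemma inr_apply_of_ne {v : V2} (h : v ≠ s2) :
    (inr : G2 →g serialSum G1 G2 t1 s2) v = Sum.inr ⟨v, h⟩ := by
  simp [inr, h]

def lift {W : Type*} {H : SimpleGraph W} (φ1 : G1 →g H) (φ2 : G2 →g H) (h : φ1 t1 = φ2 s2) :
    serialSum G1 G2 t1 s2 →g H where
  toFun := Sum.elim φ1 (fun v => φ2 v.1)
  map_rel' {p q} hpq := by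
    rcases p with u | u <;> rcases q with v | v
    · exact φ1.map_rel (adj_inl_inl.1 hpq)
    · obtain ⟨rfl, huv⟩ := adj_inl_inr.1 hpq
      simpa [h] using φ2.map_rel huv
    · obtain ⟨rfl, huv⟩ := adj_inr_inl.1 hpq
      simpa [h] using (φ2.map_rel huv).symm
    · exact φ2.map_rel (adj_inr_inr.1 hpq)

@[simp]
lemma lift_apply_inl {W : Type*} {H : SimpleGraph W} (φ1 : G1 →g H) (φ2 : G2 →g H)
    (h : φ1 t1 = φ2 s2) (v : V1) : lift φ1 φ2 h (Sum.inl v) = φ1 v := rfl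

@[simp]
lemma lift_apply_inr {W : Type*} {H : SimpleGraph W} (φ1 : G1 →g H) (φ2 : G2 →g H)
    (h : φ1 t1 = φ2 s2) (v : {v : V2 // v ≠ s2}) : lift φ1 φ2 h (Sum.inr v) = φ2 v.1 := rfl

end serialSum

theorem stmt_7_general (n : ℕ) {V1 V2 : Type*} (G1 : SimpleGraph V1) (G2 : SimpleGraph V2)
    (s1 t1 : V1) (s2 t2 : V2) (h2 : s2 ≠ t2)
    (S1 S2 : Set (ZMod n))
    (hS1 : forcedSet n G1 s1 t1 = S1) (hS2 : forcedSet n G2 s2 t2 = S2) :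
    forcedSet n (serialSum G1 G2 t1 s2) (Sum.inl s1) (Sum.inr ⟨t2, h2.symm⟩)
      = S1 + S2 := by
  subst hS1 hS2
  ext x
  constructor
  · rintro ⟨φ, hs, rfl⟩
    refine ⟨_, sub_mem_forcedSet (φ.comp serialSum.inl) s1 t1,
      _, sub_mem_forcedSet (φ.comp serialSum.inr) s2 t2, ?_⟩
    simp [hs, serialSum.inr_apply_of_ne h2.symm]
  · rintro ⟨a, ⟨φ1, hs1, rfl⟩, b, ⟨φ2, hs2, rfl⟩, rfl⟩
    exact ⟨serialSum.lift φ1 ((cycleGraph.addRight (φ1 t1)).comp φ2) (by simp [hs2]),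
      hs1, by simp [add_comm]⟩

/-- If `(G1,s1,t1)` is `S1`-forcing and `(G2,s2,t2)` is `S2`-forcing
with respect to `C_n`, then their serial sum (terminals `s1` and `t2`) is
`(S1 + S2)`-forcing. -/
theorem stmt_7 (n : ℕ) {V1 V2 : Type*} (G1 : SimpleGraph V1) (G2 : SimpleGraph V2)
    (s1 t1 : V1) (s2 t2 : V2) (h1 : s1 ≠ t1) (h2 : s2 ≠ t2)
    (S1 S2 : Set (ZMod n))
    (hS1 : forcedSet n G1 s1 t1 = S1) (hS2 : forcedSet n G2 s2 t2 = S2) :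
    forcedSet n (serialSum G1 G2 t1 s2) (Sum.inl s1) (Sum.inr ⟨t2, h2.symm⟩)
      = S1 + S2 :=
  stmt_7_general n G1 G2 s1 t1 s2 t2 h2 S1 S2 hS1 hS2
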